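/- Let q be a prime, N ≥ 1, and let Q be a nonconstant multilinear polynomial in N variables over F_q. If x is uniformly distributed on F_q^N, then the total variation distance between the law of Q(x) and the uniform distribution on F_q is at most (N−1)/(2·√q). -/
import Mathlib

open MvPolynomial Finset

namespace Stmt10

variable {q : ℕ} [Fact (Nat.Prime q)] {n : ℕ}

lemma sum_pi_succ {M : Type*} [AddCommMonoid M] (g : (Fin (n+1) → ZMod q) → M) :
    ∑ x, g x = ∑ y : Fin n → ZMod q, ∑ t : ZMod q, g (Fin.cons t y) := by
  rw [← Equiv.sum_comp (Fin.consEquiv (fun _ => ZMod q)) g, Fintype.sum_prod_type]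
  exact Finset.sum_comm

lemma deg_le (Q : MvPolynomial (Fin (n+1)) (ZMod q)) (hml : ∀ s ∈ Q.support, ∀ j, s j ≤ 1) :
    (finSuccEquiv (ZMod q) n Q).natDegree ≤ 1 := by
  rw [Polynomial.natDegree_le_iff_coeff_eq_zero]
  intro i hi
  ext m
  rw [finSuccEquiv_coeff_coeff, coeff_zero]
  by_contra h
  have := hml (m.cons i) (mem_support_iff.2 h) 0
  rw [Finsupp.cons_zero] at this
  omega

lemma ml_coeff (Q : MvPolynomial (Fin (n+1)) (ZMod q)) (hml : ∀ s ∈ Q.support, ∀ j, s j ≤ 1)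
    (i : ℕ) : ∀ s ∈ ((finSuccEquiv (ZMod q) n Q).coeff i).support, ∀ j, s j ≤ 1 := by
  intro s hs j
  rw [mem_support_iff, finSuccEquiv_coeff_coeff] at hs
  have := hml (s.cons i) (mem_support_iff.2 hs) j.succ
  rwa [Finsupp.cons_succ] at this

lemma eval_split (Q : MvPolynomial (Fin (n+1)) (ZMod q)) (hml : ∀ s ∈ Q.support, ∀ j, s j ≤ 1)
    (t : ZMod q) (y : Fin n → ZMod q) :
    eval (Fin.cons t y) Q = eval y ((finSuccEquiv (ZMod q) n Q).coeff 1) * t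
      + eval y ((finSuccEquiv (ZMod q) n Q).coeff 0) := by
  rw [eval_eq_eval_mv_eval']
  have h : (Polynomial.map (eval y) (finSuccEquiv (ZMod q) n Q)).natDegree ≤ 1 :=
    le_trans (Polynomial.natDegree_map_le) (deg_le Q hml)
  conv_lhs => rw [Polynomial.eq_X_add_C_of_natDegree_le_one h]
  simp [Polynomial.coeff_map]

lemma const_of (Q : MvPolynomial (Fin (n+1)) (ZMod q)) (hml : ∀ s ∈ Q.support, ∀ j, s j ≤ 1)
    (h1 : (finSuccEquiv (ZMod q) n Q).coeff 1 = 0) (c : ZMod q)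
    (h0 : (finSuccEquiv (ZMod q) n Q).coeff 0 = C c) : Q = C c := by
  have hP : finSuccEquiv (ZMod q) n Q = Polynomial.C (C c) := by
    conv_lhs => rw [Polynomial.eq_X_add_C_of_natDegree_le_one (deg_le Q hml)]
    rw [h1, h0]; simp
  have : finSuccEquiv (ZMod q) n (C c) = Polynomial.C (C c) := by
    simp [finSuccEquiv_apply]
  exact (finSuccEquiv (ZMod q) n).injective (by rw [hP, this])

lemma zero_count : ∀ (n : ℕ) (A : MvPolynomial (Fin n) (ZMod q)), A ≠ 0 →
    (∀ s ∈ A.support, ∀ j, s j ≤ 1) →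
    (q-1)^n ≤ (Finset.univ.filter (fun x : Fin n → ZMod q => eval x A ≠ 0)).card := by
  intro n
  induction n with
  | zero =>
    intro A hA _
    rw [pow_zero, Nat.one_le_iff_ne_zero, ← Nat.pos_iff_ne_zero, Finset.card_pos]
    refine ⟨fun i => i.elim0, Finset.mem_filter.2 ⟨Finset.mem_univ _, ?_⟩⟩
    rw [eq_C_of_isEmpty A] at hA ⊢
    simp only [eval_C]
    intro h; exact hA (by rw [h, map_zero])
  | succ n IH =>
    intro A hA hml
    classical
    rw [Finset.card_filter]
    rw [sum_pi_succ (fun x => if eval x A ≠ 0 then 1 else 0)]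
    simp only [eval_split A hml]
    by_cases h1 : (finSuccEquiv (ZMod q) n A).coeff 1 = 0
    · have h0 : (finSuccEquiv (ZMod q) n A).coeff 0 ≠ 0 := by
        intro h
        exact hA (by simpa using const_of A hml h1 0 (by simpa using h))
      have key := IH _ h0 (ml_coeff A hml 0)
      rw [Finset.card_filter] at key
      simp only [h1, map_zero, zero_mul, zero_add]
      have : ∀ y : Fin n → ZMod q,
          (∑ _t : ZMod q, if eval y ((finSuccEquiv (ZMod q) n A).coeff 0) ≠ 0 then 1 else 0)
          = q * (if eval y ((finSuccEquiv (ZMod q) n A).coeff 0) ≠ 0 then 1 else 0) := by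
        intro y
        rw [Finset.sum_const, smul_eq_mul, Finset.card_univ, ZMod.card]
      rw [Finset.sum_congr rfl (fun y _ => this y), ← Finset.mul_sum]
      calc (q-1)^(n+1) = (q-1)^n * (q-1) := pow_succ _ _
        _ ≤ (q-1)^n * q := Nat.mul_le_mul_left _ (Nat.sub_le q 1)
        _ ≤ _ := by
            rw [mul_comm]
            exact Nat.mul_le_mul_left _ key
    · have key := IH _ h1 (ml_coeff A hml 1)
      rw [Finset.card_filter] at key
      have hper : ∀ y : Fin n → ZMod q,
          (if eval y ((finSuccEquiv (ZMod q) n A).coeff 1) ≠ 0 then 1 else 0) * (q-1)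
          ≤ ∑ t : ZMod q, if eval y ((finSuccEquiv (ZMod q) n A).coeff 1) * t
              + eval y ((finSuccEquiv (ZMod q) n A).coeff 0) ≠ 0 then 1 else 0 := by
        intro y
        set a := eval y ((finSuccEquiv (ZMod q) n A).coeff 1)
        set b := eval y ((finSuccEquiv (ZMod q) n A).coeff 0)
        by_cases ha : a = 0
        · simp [ha]
        · rw [if_pos ha, one_mul, ← Finset.card_filter]
          have hsplit := Finset.card_filter_add_card_filter_not
            (s := (Finset.univ : Finset (ZMod q))) (p := fun t => a * t + b ≠ 0)
          have hone : (Finset.univ.filter (fun t : ZMod q => ¬ (a * t + b ≠ 0))).card = 1 := by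
            have : (Finset.univ.filter (fun t : ZMod q => ¬ (a * t + b ≠ 0)))
                = {-b / a} := by
              ext t
              simp only [Finset.mem_filter, Finset.mem_univ, true_and, not_not,
                Finset.mem_singleton]
              constructor
              · intro h
                field_simp
                linear_combination h
              · intro h
                subst h
                field_simp
                ring
            rw [this, Finset.card_singleton]
          rw [Finset.card_univ, ZMod.card] at hsplit
          omega
      calc (q-1)^(n+1) = (q-1)^n * (q-1) := pow_succ _ _
        _ ≤ (∑ y : Fin n → ZMod q, if eval y ((finSuccEquiv (ZMod q) n A).coeff 1) ≠ 0
              then 1 else 0) * (q-1) := Nat.mul_le_mul_right _ key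
        _ = ∑ y : Fin n → ZMod q, (if eval y ((finSuccEquiv (ZMod q) n A).coeff 1) ≠ 0
              then 1 else 0) * (q-1) := Finset.sum_mul _ _ _
        _ ≤ _ := Finset.sum_le_sum (fun y _ => hper y)

lemma hq2 : 2 ≤ q := (Fact.out : q.Prime).two_le

lemma inner_sum (a b : ZMod q) :
    ∑ t : ZMod q, ZMod.stdAddChar (a * t + b)
      = (if a = 0 then (q:ℂ) else 0) * ZMod.stdAddChar b := by
  haveI : NeZero q := ⟨(Fact.out : q.Prime).ne_zero⟩
  classical
  simp only [AddChar.map_add_eq_mul]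
  rw [← Finset.sum_mul]
  congr 1
  have : ∀ t : ZMod q, ZMod.stdAddChar (a * t) = ZMod.stdAddChar (t * a) := by
    intro t; rw [mul_comm]
  rw [Finset.sum_congr rfl (fun t _ => this t),
    AddChar.sum_mulShift a (ZMod.isPrimitive_stdAddChar q), ZMod.card]
  split <;> simp

lemma bias_of_ne (n : ℕ) (Q : MvPolynomial (Fin (n+1)) (ZMod q))
    (hml : ∀ s ∈ Q.support, ∀ j, s j ≤ 1)
    (h1 : (finSuccEquiv (ZMod q) n Q).coeff 1 ≠ 0) :
    ‖∑ x : Fin (n+1) → ZMod q, ZMod.stdAddChar (eval x Q)‖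
      ≤ (q:ℝ)^(n+1) - q * ((q:ℝ)-1)^n := by
  classical
  haveI : NeZero q := ⟨(Fact.out : q.Prime).ne_zero⟩
  set a := fun y : Fin n → ZMod q => eval y ((finSuccEquiv (ZMod q) n Q).coeff 1) with ha
  set b := fun y : Fin n → ZMod q => eval y ((finSuccEquiv (ZMod q) n Q).coeff 0) with hb
  rw [sum_pi_succ (fun x => ZMod.stdAddChar (eval x Q))]
  have hev : ∀ (y : Fin n → ZMod q),
      (∑ t : ZMod q, ZMod.stdAddChar (eval (Fin.cons t y) Q))
        = (if a y = 0 then (q:ℂ) else 0) * ZMod.stdAddChar (b y) := by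
    intro y
    rw [Finset.sum_congr rfl (fun t _ => by rw [eval_split Q hml t y]), inner_sum]
  rw [Finset.sum_congr rfl (fun y _ => hev y)]
  -- count zeros of a
  have hz := zero_count n _ h1 (ml_coeff Q hml 1)
  have hsplit := Finset.card_filter_add_card_filter_not
    (s := (Finset.univ : Finset (Fin n → ZMod q))) (p := fun y => a y ≠ 0)
  rw [Finset.card_univ] at hsplit
  have hcard : Fintype.card (Fin n → ZMod q) = q^n := by
    simp [ZMod.card]
  rw [hcard] at hsplit
  have hzR : ((q:ℝ)-1)^n ≤ ((Finset.univ.filter (fun y => a y ≠ 0)).card : ℝ) := by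
    have h1q : 1 ≤ q := le_trans one_le_two hq2
    calc ((q:ℝ)-1)^n = (((q-1 : ℕ)):ℝ)^n := by rw [Nat.cast_sub h1q, Nat.cast_one]
      _ ≤ _ := by exact_mod_cast Nat.cast_le.2 hz
  have hsR : ((Finset.univ.filter (fun y => ¬ a y ≠ 0)).card : ℝ)
      ≤ (q:ℝ)^n - ((q:ℝ)-1)^n := by
    have := hsplit
    have hcast : ((Finset.univ.filter (fun y => a y ≠ 0)).card : ℝ)
        + ((Finset.univ.filter (fun y => ¬ a y ≠ 0)).card : ℝ) = (q:ℝ)^n := by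
      exact_mod_cast congrArg (Nat.cast : ℕ → ℝ) this
    linarith
  calc ‖∑ y : Fin n → ZMod q, (if a y = 0 then (q:ℂ) else 0) * ZMod.stdAddChar (b y)‖
      ≤ ∑ y : Fin n → ZMod q, ‖(if a y = 0 then (q:ℂ) else 0) * ZMod.stdAddChar (b y)‖ :=
        norm_sum_le _ _
    _ = ∑ y : Fin n → ZMod q, (if a y = 0 then (q:ℝ) else 0) := by
        refine Finset.sum_congr rfl (fun y _ => ?_)
        rw [norm_mul, AddChar.norm_apply, mul_one]
        split <;> simp
    _ = ((Finset.univ.filter (fun y => ¬ a y ≠ 0)).card : ℝ) * q := by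
        rw [Finset.sum_ite, Finset.sum_const, Finset.sum_const]
        have : (Finset.univ.filter (fun y => a y = 0))
            = (Finset.univ.filter (fun y => ¬ a y ≠ 0)) := by
          simp only [ne_eq, not_not]
        rw [this]
        simp [nsmul_eq_mul]
    _ ≤ ((q:ℝ)^n - ((q:ℝ)-1)^n) * q := by
        have hq0 : (0:ℝ) ≤ q := Nat.cast_nonneg q
        exact mul_le_mul_of_nonneg_right hsR hq0
    _ = (q:ℝ)^(n+1) - q * ((q:ℝ)-1)^n := by ring

lemma powM : ∀ m : ℕ, (q:ℝ)^(m+1) ≤ m * (q:ℝ)^m + q * ((q:ℝ)-1)^m := by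
  have hq2R : (2:ℝ) ≤ q := by exact_mod_cast (hq2 (q := q))
  intro m
  induction m with
  | zero => simp
  | succ m IH =>
    have h1 : (0:ℝ) ≤ ((q:ℝ)-1)^m := pow_nonneg (by linarith) m
    have h2 : ((q:ℝ)-1)^m ≤ (q:ℝ)^m := pow_le_pow_left₀ (by linarith) (by linarith) m
    have hq0 : (0:ℝ) ≤ (q:ℝ) := by linarith
    calc (q:ℝ)^(m+1+1) = (q:ℝ)^(m+1) * q := pow_succ _ _
      _ ≤ ((m:ℝ) * (q:ℝ)^m + q * ((q:ℝ)-1)^m) * q := mul_le_mul_of_nonneg_right IH hq0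
      _ = (m:ℝ) * ((q:ℝ)^m * q) + (((q:ℝ)-1)^m * ((q:ℝ)-1)) * q
          + (q:ℝ) * ((q:ℝ)-1)^m := by ring
      _ ≤ (m:ℝ) * ((q:ℝ)^m * q) + (((q:ℝ)-1)^m * ((q:ℝ)-1)) * q
          + (q:ℝ) * (q:ℝ)^m := by nlinarith
      _ = ((m:ℕ)+1 : ℝ) * ((q:ℝ)^m * q) + q * (((q:ℝ)-1)^m * ((q:ℝ)-1)) := by ring
      _ = ((m+1:ℕ) : ℝ) * (q:ℝ)^(m+1) + q * ((q:ℝ)-1)^(m+1) := by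
          rw [← pow_succ, ← pow_succ]; push_cast; ring

lemma bias : ∀ (n : ℕ) (Q : MvPolynomial (Fin (n+1)) (ZMod q))
    (_ : ∀ s ∈ Q.support, ∀ j, s j ≤ 1) (_ : ∀ c : ZMod q, Q ≠ C c),
    ‖∑ x : Fin (n+1) → ZMod q, ZMod.stdAddChar (eval x Q)‖
      ≤ (q:ℝ)^(n+1) - q * ((q:ℝ)-1)^n := by
  intro n
  induction n with
  | zero =>
    intro Q hml hnc
    by_cases h1 : (finSuccEquiv (ZMod q) 0 Q).coeff 1 = 0
    · exfalso
      apply hnc (constantCoeff ((finSuccEquiv (ZMod q) 0 Q).coeff 0))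
      exact const_of Q hml h1 _ (eq_C_of_isEmpty _)
    · exact bias_of_ne 0 Q hml h1
  | succ n IH =>
    intro Q hml hnc
    by_cases h1 : (finSuccEquiv (ZMod q) (n+1) Q).coeff 1 = 0
    · set B := (finSuccEquiv (ZMod q) (n+1) Q).coeff 0 with hB
      have hBnc : ∀ c : ZMod q, B ≠ C c := fun c h => hnc c (const_of Q hml h1 c h)
      have hkey := IH B (ml_coeff Q hml 0) hBnc
      rw [sum_pi_succ (fun x => ZMod.stdAddChar (eval x Q))]
      have hev : ∀ (y : Fin (n+1) → ZMod q),
          (∑ t : ZMod q, ZMod.stdAddChar (eval (Fin.cons t y) Q))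
            = (q:ℂ) * ZMod.stdAddChar (eval y B) := by
        intro y
        rw [Finset.sum_congr rfl (fun t _ => by rw [eval_split Q hml t y, h1, map_zero,
          zero_mul, zero_add]), Finset.sum_const, Finset.card_univ, ZMod.card,
          nsmul_eq_mul]
      rw [Finset.sum_congr rfl (fun y _ => hev y), ← Finset.mul_sum, norm_mul,
        Complex.norm_natCast]
      have hq0 : (0:ℝ) ≤ q := Nat.cast_nonneg q
      have hqm : (1:ℝ) ≤ (q:ℝ) - 1 := by
        have : (2:ℝ) ≤ q := by exact_mod_cast hq2
        linarith
      have hpow : (0:ℝ) ≤ ((q:ℝ)-1)^n := by positivity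
      have hpq : ((q:ℝ)-1)^n ≤ (q:ℝ)^n := by
        apply pow_le_pow_left₀ (by linarith) (by linarith) n
      calc (q:ℝ) * ‖∑ y : Fin (n+1) → ZMod q, ZMod.stdAddChar (eval y B)‖
          ≤ (q:ℝ) * ((q:ℝ)^(n+1) - q * ((q:ℝ)-1)^n) := by
            exact mul_le_mul_of_nonneg_left hkey hq0
        _ ≤ (q:ℝ)^(n+2) - q * ((q:ℝ)-1)^(n+1) := by
            nlinarith [pow_succ ((q:ℝ)-1) n, pow_succ (q:ℝ) (n+1), mul_nonneg hq0 hpow]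
    · exact bias_of_ne (n+1) Q hml h1

end Stmt10

/-- Total variation distance between two probability mass functions on a finite set. -/
noncomputable def tvDist {Ω : Type*} [Fintype Ω] (μ ν : Ω → ℝ) : ℝ :=
  (1 / 2) * ∑ x, |μ x - ν x|

set_option maxHeartbeats 2000000 in
/-- if `Q` is a nonconstant multilinear polynomial in `N` variables over
`F_q` and `x` is uniform on `F_q^N`, then the total variation distance between the law
of `Q(x)` and the uniform distribution on `F_q` is at most `(N−1)/(2·√q)`. -/
theorem stmt_10 (q N : ℕ) [Fact (Nat.Prime q)] (hN : 1 ≤ N)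
    (Q : MvPolynomial (Fin N) (ZMod q))
    (hml : ∀ s ∈ Q.support, ∀ j, s j ≤ 1)
    (hnc : ∀ c : ZMod q, Q ≠ MvPolynomial.C c) :
    tvDist
        (fun z : ZMod q =>
          ((Finset.univ.filter
              (fun x : Fin N → ZMod q => MvPolynomial.eval x Q = z)).card : ℝ)
            / (q : ℝ) ^ N)
        (fun _ : ZMod q => 1 / q)
      ≤ ((N : ℝ) - 1) / (2 * Real.sqrt q) := by
  obtain ⟨n, rfl⟩ : ∃ n, N = n + 1 := ⟨N - 1, (Nat.succ_pred_eq_of_pos hN).symm⟩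
  haveI : NeZero q := ⟨(Fact.out : q.Prime).ne_zero⟩
  have hq2R : (2:ℝ) ≤ q := by exact_mod_cast Stmt10.hq2
  have hqR : (0:ℝ) < q := by linarith
  simp only [tvDist]
  set f : ZMod q → ℕ := fun z =>
    (Finset.univ.filter (fun x : Fin (n+1) → ZMod q => MvPolynomial.eval x Q = z)).card with hf
  set P : ℝ := (q:ℝ)^(n+1) with hP
  set G : ℝ := (q:ℝ)^n with hG
  have hGpos : 0 < G := by positivity
  have hPpos : 0 < P := by positivity
  have hPG : P = G * q := pow_succ _ _
  set M : ℝ := (q:ℝ)^(n+1) - q * ((q:ℝ)-1)^n with hM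
  set S : ZMod q → ℂ := fun c =>
    ∑ x : Fin (n+1) → ZMod q, ZMod.stdAddChar (c * MvPolynomial.eval x Q) with hS
  set T : ℝ := ∑ z : ZMod q, ((f z : ℝ))^2 with hT
  have hcardpi : Fintype.card (Fin (n+1) → ZMod q) = q^(n+1) := by simp [ZMod.card]
  -- sum of f
  have hsumN : ∑ z : ZMod q, f z = q^(n+1) := by
    rw [← hcardpi, ← Finset.card_univ]
    exact (Finset.card_eq_sum_card_fiberwise
      (f := fun x : Fin (n+1) → ZMod q => MvPolynomial.eval x Q)
      (t := Finset.univ) (fun x _ => Finset.mem_univ _)).symm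
  have hsumR : ∑ z : ZMod q, (f z : ℝ) = P := by
    rw [hP]; exact_mod_cast congrArg (Nat.cast : ℕ → ℝ) hsumN
  -- pair counting
  have hpair : ∑ z : ZMod q, f z * f z
      = ∑ x : Fin (n+1) → ZMod q, ∑ y : Fin (n+1) → ZMod q,
          (if MvPolynomial.eval x Q = MvPolynomial.eval y Q then 1 else 0) := by
    have h1 : ∀ x : Fin (n+1) → ZMod q,
        (∑ y : Fin (n+1) → ZMod q,
          if MvPolynomial.eval x Q = MvPolynomial.eval y Q then 1 else 0)
        = f (MvPolynomial.eval x Q) := by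
      intro x
      simp only [hf, Finset.card_filter]
      exact Finset.sum_congr rfl (fun y _ => if_congr eq_comm rfl rfl)
    rw [Finset.sum_congr rfl (fun x _ => h1 x)]
    have h2 : ∀ x : Fin (n+1) → ZMod q, f (MvPolynomial.eval x Q)
        = ∑ z : ZMod q, if MvPolynomial.eval x Q = z then f z else 0 := by
      intro x
      simp
    rw [Finset.sum_congr rfl (fun x _ => h2 x), Finset.sum_comm]
    refine Finset.sum_congr rfl (fun z _ => ?_)
    have h3 : ∀ x : Fin (n+1) → ZMod q, (if MvPolynomial.eval x Q = z then f z else 0)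
        = f z * (if MvPolynomial.eval x Q = z then 1 else 0) := by
      intro x; split <;> simp
    rw [Finset.sum_congr rfl (fun x _ => h3 x), ← Finset.mul_sum, ← Finset.card_filter]
  -- character sum identities
  have hterm : ∀ x y : Fin (n+1) → ZMod q,
      (if MvPolynomial.eval x Q = MvPolynomial.eval y Q then (q:ℂ) else 0)
      = ∑ c : ZMod q,
          ZMod.stdAddChar (c * (MvPolynomial.eval x Q - MvPolynomial.eval y Q)) := by
    intro x y
    rw [AddChar.sum_mulShift _ (ZMod.isPrimitive_stdAddChar q)]
    by_cases h : MvPolynomial.eval x Q = MvPolynomial.eval y Q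
    · simp [h, sub_eq_zero.2 h, ZMod.card]
    · simp [h, sub_ne_zero.2 h, ZMod.card]
  have hconj : ∀ a : ZMod q, ZMod.stdAddChar (-a) = (starRingEnd ℂ) (ZMod.stdAddChar a) := by
    intro a
    have hpos : 0 < ringChar (ZMod q) := by
      rw [ZMod.ringChar_zmod_n]; exact (Fact.out : q.Prime).pos
    rw [AddChar.starComp_apply hpos, AddChar.inv_apply]
  have hsplitc : ∀ (c u v : ZMod q), ZMod.stdAddChar (c * (u - v))
      = ZMod.stdAddChar (c*u) * (starRingEnd ℂ) (ZMod.stdAddChar (c*v)) := by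
    intro c u v
    rw [mul_sub, sub_eq_add_neg, AddChar.map_add_eq_mul, ← hconj]
  have hC : (q:ℂ) * ((∑ z : ZMod q, f z * f z : ℕ) : ℂ)
      = ∑ c : ZMod q, S c * (starRingEnd ℂ) (S c) := by
    have hc : ∀ c : ZMod q,
        (∑ x : Fin (n+1) → ZMod q, ∑ y : Fin (n+1) → ZMod q,
          ZMod.stdAddChar (c * MvPolynomial.eval x Q)
            * (starRingEnd ℂ) (ZMod.stdAddChar (c * MvPolynomial.eval y Q)))
        = S c * (starRingEnd ℂ) (S c) := by
      intro c
      calc ∑ x : Fin (n+1) → ZMod q, ∑ y : Fin (n+1) → ZMod q,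
            ZMod.stdAddChar (c * MvPolynomial.eval x Q)
              * (starRingEnd ℂ) (ZMod.stdAddChar (c * MvPolynomial.eval y Q))
          = ∑ x : Fin (n+1) → ZMod q, ZMod.stdAddChar (c * MvPolynomial.eval x Q)
              * ∑ y : Fin (n+1) → ZMod q,
                (starRingEnd ℂ) (ZMod.stdAddChar (c * MvPolynomial.eval y Q)) :=
            Finset.sum_congr rfl (fun x _ => (Finset.mul_sum _ _ _).symm)
        _ = S c * (starRingEnd ℂ) (S c) := by
            rw [← Finset.sum_mul]
            refine congrArg₂ (· * ·) rfl ?_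
            exact (map_sum (starRingEnd ℂ) (fun y : Fin (n+1) → ZMod q =>
              ZMod.stdAddChar (c * MvPolynomial.eval y Q)) Finset.univ).symm
    rw [hpair]
    push_cast
    rw [Finset.mul_sum]
    calc ∑ x : Fin (n+1) → ZMod q, (q:ℂ) * ∑ y : Fin (n+1) → ZMod q,
          (if MvPolynomial.eval x Q = MvPolynomial.eval y Q then (1:ℂ) else 0)
        = ∑ x : Fin (n+1) → ZMod q, ∑ y : Fin (n+1) → ZMod q, ∑ c : ZMod q,
            ZMod.stdAddChar (c * MvPolynomial.eval x Q)
              * (starRingEnd ℂ) (ZMod.stdAddChar (c * MvPolynomial.eval y Q)) := by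
          refine Finset.sum_congr rfl (fun x _ => ?_)
          rw [Finset.mul_sum]
          refine Finset.sum_congr rfl (fun y _ => ?_)
          rw [mul_ite, mul_one, mul_zero, hterm x y]
          exact Finset.sum_congr rfl (fun c _ => hsplitc c _ _)
      _ = ∑ c : ZMod q, ∑ x : Fin (n+1) → ZMod q, ∑ y : Fin (n+1) → ZMod q,
            ZMod.stdAddChar (c * MvPolynomial.eval x Q)
              * (starRingEnd ℂ) (ZMod.stdAddChar (c * MvPolynomial.eval y Q)) := by
          rw [Finset.sum_congr rfl
            (fun x (_ : x ∈ Finset.univ) => Finset.sum_comm), Finset.sum_comm]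
      _ = ∑ c : ZMod q, S c * (starRingEnd ℂ) (S c) :=
          Finset.sum_congr rfl (fun c _ => hc c)
  have hqT : (q:ℝ) * T = ∑ c : ZMod q, ‖S c‖^2 := by
    apply Complex.ofReal_injective
    rw [hT]
    push_cast
    calc ((q:ℝ):ℂ) * ∑ z : ZMod q, ((f z : ℂ))^2
        = (q:ℂ) * ((∑ z : ZMod q, f z * f z : ℕ) : ℂ) := by
          push_cast
          rw [Finset.sum_congr rfl (fun z (_ : z ∈ Finset.univ) => sq ((f z : ℂ)))]
      _ = ∑ c : ZMod q, S c * (starRingEnd ℂ) (S c) := hC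
      _ = ∑ c : ZMod q, ((‖S c‖:ℂ))^2 :=
          Finset.sum_congr rfl (fun c _ => Complex.mul_conj' _)
  -- bounds on character sums
  have hM0 : 0 ≤ M := by
    have h2 : ((q:ℝ)-1)^n ≤ (q:ℝ)^n := pow_le_pow_left₀ (by linarith) (by linarith) n
    rw [hM, pow_succ]
    nlinarith
  have hMB : M ≤ n * G := by
    have := Stmt10.powM (q := q) n
    rw [hM, hG]; linarith
  have h0 : S 0 = ((q:ℕ):ℂ)^(n+1) := by
    simp only [hS]
    simp only [zero_mul, AddChar.map_zero_eq_one]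
    rw [Finset.sum_const, Finset.card_univ, hcardpi, nsmul_eq_mul, mul_one]
    push_cast; ring
  have hS0 : ‖S 0‖ = P := by
    rw [h0, norm_pow, Complex.norm_natCast, hP]
  have hSc : ∀ c : ZMod q, c ≠ 0 → ‖S c‖ ≤ M := by
    intro c hc
    have hml' : ∀ s ∈ (C c * Q).support, ∀ j, s j ≤ 1 := by
      intro s hs j
      apply hml s _ j
      rw [mem_support_iff] at hs ⊢
      intro h
      exact hs (by rw [coeff_C_mul, h, mul_zero])
    have hnc' : ∀ e : ZMod q, C c * Q ≠ C e := by
      intro e h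
      apply hnc (c⁻¹ * e)
      calc Q = (C (c⁻¹) * C c) * Q := by rw [← C_mul, inv_mul_cancel₀ hc, C_1, one_mul]
        _ = C (c⁻¹) * (C c * Q) := by rw [mul_assoc]
        _ = C (c⁻¹) * C e := by rw [h]
        _ = C (c⁻¹ * e) := by rw [C_mul]
    have hb := Stmt10.bias n (C c * Q) hml' hnc'
    rw [hM]
    refine le_trans (le_of_eq ?_) hb
    simp only [hS]
    refine congrArg norm (Finset.sum_congr rfl (fun x _ => ?_))
    refine congrArg ZMod.stdAddChar ?_
    rw [map_mul, eval_C]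
  have hTb : T ≤ (P^2 + ((q:ℝ)-1) * M^2)/q := by
    rw [le_div_iff₀ hqR]
    have hsum_le : ∑ c : ZMod q, ‖S c‖^2 ≤ P^2 + ((q:ℝ)-1) * M^2 := by
      rw [← Finset.add_sum_erase Finset.univ _ (Finset.mem_univ (0 : ZMod q))]
      have h1 : ‖S 0‖^2 = P^2 := by rw [hS0]
      have h2 : ∑ c ∈ Finset.univ.erase (0:ZMod q), ‖S c‖^2 ≤ ((q:ℝ)-1) * M^2 := by
        have hcard : (Finset.univ.erase (0:ZMod q)).card = q - 1 := by
          rw [Finset.card_erase_of_mem (Finset.mem_univ _), Finset.card_univ, ZMod.card]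
        have hle : ∀ c ∈ Finset.univ.erase (0:ZMod q), ‖S c‖^2 ≤ M^2 := by
          intro c hcmem
          exact pow_le_pow_left₀ (norm_nonneg _) (hSc c (Finset.ne_of_mem_erase hcmem)) 2
        calc ∑ c ∈ Finset.univ.erase (0:ZMod q), ‖S c‖^2
            ≤ (Finset.univ.erase (0:ZMod q)).card • M^2 :=
              Finset.sum_le_card_nsmul _ _ _ hle
          _ = ((q-1:ℕ):ℝ) * M^2 := by rw [hcard, nsmul_eq_mul]
          _ = ((q:ℝ)-1) * M^2 := by
              rw [Nat.cast_sub (le_trans one_le_two (Stmt10.hq2 (q := q))), Nat.cast_one]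
      linarith
    calc T * q = q * T := mul_comm _ _
      _ = ∑ c : ZMod q, ‖S c‖^2 := hqT
      _ ≤ _ := hsum_le
  -- total variation via Cauchy-Schwarz
  set d : ZMod q → ℝ := fun z => (f z:ℝ)/P - 1/q with hd
  have hd2 : ∑ z : ZMod q, d z ^ 2 = T/P^2 - 1/q := by
    have hexp : ∀ z : ZMod q, d z ^ 2
        = ((f z:ℝ)^2) * (1/P^2) - (2/(P*q)) * (f z:ℝ) + 1/q^2 := by
      intro z
      show ((f z:ℝ)/P - 1/q) ^ 2 = _
      have hP0 : P ≠ 0 := ne_of_gt hPpos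
      have hq0 : (q:ℝ) ≠ 0 := ne_of_gt hqR
      field_simp
      ring
    rw [Finset.sum_congr rfl (fun z _ => hexp z), Finset.sum_add_distrib,
      Finset.sum_sub_distrib, ← Finset.sum_mul, ← Finset.mul_sum, hsumR,
      Finset.sum_const, Finset.card_univ, ZMod.card, nsmul_eq_mul, ← hT]
    field_simp
    ring
  have hCS : (∑ z : ZMod q, |d z|)^2 ≤ (q:ℝ) * ∑ z : ZMod q, d z ^ 2 := by
    have hcs := sq_sum_le_card_mul_sum_sq
      (s := (Finset.univ : Finset (ZMod q))) (f := fun z => |d z|)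
    rw [Finset.card_univ, ZMod.card] at hcs
    simpa [sq_abs] using hcs
  have hfinal2 : (∑ z : ZMod q, |d z|)^2 ≤ (n:ℝ)^2 / q := by
    have e0 : T/P^2 ≤ ((P^2 + ((q:ℝ)-1)*M^2)/q)/P^2 := by gcongr
    have e1 : (q:ℝ) * (T/P^2 - 1/q)
        ≤ (q:ℝ) * (((P^2 + ((q:ℝ)-1)*M^2)/q)/P^2 - 1/q) := by
      apply mul_le_mul_of_nonneg_left _ (le_of_lt hqR)
      linarith
    have e2 : (q:ℝ) * (((P^2 + ((q:ℝ)-1)*M^2)/q)/P^2 - 1/q) = ((q:ℝ)-1)*M^2/P^2 := by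
      field_simp
      ring
    have e3 : ((q:ℝ)-1)*M^2/P^2 ≤ ((q:ℝ)-1)*(n*G)^2/P^2 := by
      have hMsq : M^2 ≤ ((n:ℝ)*G)^2 := by
        apply pow_le_pow_left₀ hM0 hMB
      apply div_le_div_of_nonneg_right ?_ ?_
      · apply mul_le_mul_of_nonneg_left hMsq (by linarith)
      · positivity
    have e4 : ((q:ℝ)-1)*((n:ℝ)*G)^2/P^2 ≤ (n:ℝ)^2/q := by
      have hn2 : (0:ℝ) ≤ (n:ℝ)^2 * G^2 := by positivity
      rw [hPG, div_le_div_iff₀ (pow_pos (mul_pos hGpos hqR) 2) hqR]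
      have hfact : ((q:ℝ)-1) * ((n:ℝ)*G)^2 * q = ((n:ℝ)^2*G^2) * (((q:ℝ)-1)*q) := by ring
      have hfact2 : (n:ℝ)^2 * (G*(q:ℝ))^2 = ((n:ℝ)^2*G^2) * ((q:ℝ)*q) := by ring
      rw [hfact, hfact2]
      apply mul_le_mul_of_nonneg_left ?_ hn2
      nlinarith
    calc (∑ z : ZMod q, |d z|)^2 ≤ (q:ℝ) * ∑ z : ZMod q, d z ^ 2 := hCS
      _ = (q:ℝ) * (T/P^2 - 1/q) := by rw [hd2]
      _ ≤ (q:ℝ) * (((P^2 + ((q:ℝ)-1)*M^2)/q)/P^2 - 1/q) := e1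
      _ = ((q:ℝ)-1)*M^2/P^2 := e2
      _ ≤ ((q:ℝ)-1)*((n:ℝ)*G)^2/P^2 := e3
      _ ≤ (n:ℝ)^2/q := e4
  have habs : ∑ z : ZMod q, |d z| ≤ (n:ℝ)/Real.sqrt q := by
    have h0' : 0 ≤ ∑ z : ZMod q, |d z| := Finset.sum_nonneg fun z _ => abs_nonneg _
    have hsq : Real.sqrt ((n:ℝ)^2 / q) = (n:ℝ) / Real.sqrt q := by
      rw [Real.sqrt_div (by positivity) _, Real.sqrt_sq (by positivity)]
    rw [← hsq]
    exact (Real.le_sqrt h0' (by positivity)).2 hfinal2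
  have hsqrtq : 0 < Real.sqrt q := Real.sqrt_pos.2 hqR
  have hgoal : ((n+1:ℕ):ℝ) - 1 = (n:ℝ) := by push_cast; ring
  show (1:ℝ)/2 * ∑ z : ZMod q, |d z| ≤ (((n+1:ℕ):ℝ) - 1) / (2 * Real.sqrt q)
  rw [hgoal]
  calc (1:ℝ)/2 * ∑ z : ZMod q, |d z| ≤ (1:ℝ)/2 * ((n:ℝ)/Real.sqrt q) := by linarith
    _ = (n:ℝ) / (2 * Real.sqrt q) := by field_simp
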